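/- Privacy of Shamir secret sharing: for any secret s in a finite field F and any set of fewer than t distinct nonzero evaluation points, the joint distribution of the corresponding shares (when the t−1 non-constant coefficients of the degree-< t polynomial are chosen uniformly at random) is uniform on F^{|J|} and in particular independent of s. -/

import Mathlib

/-!
The shares are `s` plus a linear image of the uniformly random coefficients. That linear map is
onto: given target shares `y`, interpolate `y j / x j` at the `m ≤ t - 1` distinct nodes by a
polynomial `q` of degree `< t - 1`; then `X * q` has zero constant term and takes the value `y j`
at `x j`. A surjective additive map pushes the uniform distribution forward to the uniform one,
because all its fibres are translates of the kernel.
-/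

open Finset Polynomial

namespace PMF

theorem map_uniformOfFintype_of_card_fiber_eq {α β : Type*} [Fintype α] [Nonempty α]
    [Fintype β] [Nonempty β] [DecidableEq β] (f : α → β)
    (hf : ∀ b b', #{a | f a = b} = #{a | f a = b'}) :
    (uniformOfFintype α).map f = uniformOfFintype β := by
  ext b
  have hcard : Fintype.card α = Fintype.card β * #{a | f a = b} := by
    rw [← card_univ, card_eq_sum_card_fiberwise (t := univ) fun a _ => mem_univ (f a),
      sum_congr rfl fun b' _ => hf b' b, sum_const, card_univ, smul_eq_mul]
  have hfiber : (#{a | f a = b} : ENNReal) ≠ 0 := by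
    have := Fintype.card_ne_zero (α := α)
    rw [hcard] at this
    exact_mod_cast right_ne_zero_of_mul this
  simp only [map_apply, uniformOfFintype_apply, tsum_fintype, sum_ite, sum_const_zero, add_zero,
    sum_const, nsmul_eq_mul, hcard, Nat.cast_mul]
  simp_rw [eq_comm (a := b)]
  rw [ENNReal.mul_inv (by simp) (by simp), mul_comm, mul_assoc,
    ENNReal.inv_mul_cancel hfiber (by simp), mul_one]

theorem map_add_uniformOfFintype_of_surjective {G H Φ : Type*} [AddGroup G] [Fintype G]
    [AddGroup H] [Fintype H] [FunLike Φ G H] [AddMonoidHomClass Φ G H]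
    (L : Φ) (hL : Function.Surjective L) (c : H) :
    (uniformOfFintype G).map (fun a => c + L a) = uniformOfFintype H := by
  classical
  refine map_uniformOfFintype_of_card_fiber_eq _ fun b b' => ?_
  simp only [← eq_neg_add_iff_add_eq]
  exact AddMonoidHom.card_fiber_eq_of_mem_range L (hL _) (hL _)

end PMF

def evalWithoutConstant {F ι : Type*} [Field F] (x : ι → F) (n : ℕ) :
    (Fin n → F) →ₗ[F] (ι → F) where
  toFun a j := ∑ i, a i * x j ^ ((i : ℕ) + 1)
  map_add' a b := by ext j; simp [add_mul, sum_add_distrib]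
  map_smul' c a := by ext j; simp [mul_sum, mul_assoc]

theorem evalWithoutConstant_surjective {F ι : Type*} [Field F] [Fintype ι]
    {x : ι → F} (hinj : Function.Injective x) (hx0 : ∀ j, x j ≠ 0) {n : ℕ}
    (hn : Fintype.card ι ≤ n) : Function.Surjective (evalWithoutConstant x n) := by
  classical
  intro y
  set q := Lagrange.interpolate univ x fun j => y j / x j
  have hdeg : q.degree < n :=
    (Lagrange.degree_interpolate_lt _ hinj.injOn).trans_le (by exact_mod_cast hn)
  refine ⟨fun i => q.coeff i, funext fun j => ?_⟩
  calc ∑ i : Fin n, q.coeff i * x j ^ ((i : ℕ) + 1)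
      = x j * ∑ i : Fin n, q.coeff i * x j ^ (i : ℕ) := by
        rw [mul_sum]; exact sum_congr rfl fun i _ => by ring
    _ = x j * q.eval (x j) := by
        rw [eval_eq_sum, ← sum_fin (fun e a => a * x j ^ e) (by simp) hdeg]
    _ = y j := by
        rw [Lagrange.eval_interpolate_at_node _ hinj.injOn (mem_univ j),
          mul_div_cancel₀ _ (hx0 j)]

theorem shamir_privacy_general {F : Type*} [Field F] [Fintype F]
    (t : ℕ) (m : ℕ) (hm : m ≤ t - 1)
    (x : Fin m → F) (hinj : Function.Injective x) (hx0 : ∀ j, x j ≠ 0)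
    (s : F) :
    PMF.map
        (fun a : Fin (t - 1) → F =>
          fun j : Fin m => s + ∑ i : Fin (t - 1), a i * x j ^ ((i : ℕ) + 1))
        (PMF.uniformOfFintype (Fin (t - 1) → F))
      = PMF.uniformOfFintype (Fin m → F) :=
  PMF.map_add_uniformOfFintype_of_surjective (evalWithoutConstant x (t - 1))
    (evalWithoutConstant_surjective hinj hx0 (by simpa using hm)) (fun _ => s)

theorem shamir_privacy {F : Type*} [Field F] [Fintype F] [DecidableEq F]
    (t : ℕ) (ht : 1 ≤ t) (m : ℕ) (hm : m ≤ t - 1)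
    (x : Fin m → F) (hinj : Function.Injective x) (hx0 : ∀ j, x j ≠ 0)
    (s : F) :
    PMF.map
        (fun a : Fin (t - 1) → F =>
          fun j : Fin m => s + ∑ i : Fin (t - 1), a i * x j ^ ((i : ℕ) + 1))
        (PMF.uniformOfFintype (Fin (t - 1) → F))
      = PMF.uniformOfFintype (Fin m → F) :=
  shamir_privacy_general t m hm x hinj hx0 s
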